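/- Let Θ₀ < λ ≤ 1 and suppose the map (z,φ) ↦ F_{z,λ}(φ) on ℝ × B¹(ℝ⁺) attains its global minimum at (ζ, f) with f nonnegative. If ν ∈ ℝ satisfies λ₂(ν) > λ + (ν−ζ)², then λ₁(ν) ≥ λ + (ν−ζ)²·[1 − 4‖(t−ζ)f‖₂² / ((λ₂(ν) − λ − (ν−ζ)²)·‖f‖₂²)], where ‖(t−ζ)f‖₂ is the L²((0,∞)) norm of t ↦ (t−ζ)f(t). -/

import Mathlib

open MeasureTheory Set Real Filter

noncomputable section

/-- Membership in the space `B¹(ℝ⁺)`: square integrable on `(0,∞)`, with square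
integrable derivative and such that `t ↦ t·φ(t)` is square integrable. -/
def MemB1 (φ : ℝ → ℝ) : Prop :=
  ContinuousWithinAt φ (Ici 0) 0 ∧
  (∀ t ∈ Ioi (0:ℝ), DifferentiableAt ℝ φ t) ∧
  IntegrableOn (fun t => (φ t) ^ 2) (Ioi 0) ∧
  IntegrableOn (fun t => (deriv φ t) ^ 2) (Ioi 0) ∧
  IntegrableOn (fun t => (t * φ t) ^ 2) (Ioi 0)

/-- The Rayleigh quotient of the de Gennes operator `-d²/dt² + (t-ξ)²`
(Neumann realization on `L²((0,∞))`). -/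
def RQ (ξ : ℝ) (φ : ℝ → ℝ) : ℝ :=
  (∫ t in Ioi (0:ℝ), ((deriv φ t) ^ 2 + (t - ξ) ^ 2 * (φ t) ^ 2)) /
  (∫ t in Ioi (0:ℝ), (φ t) ^ 2)

/-- The ground state energy `μ₁(ξ)` of the de Gennes operator. -/
def mu1 (ξ : ℝ) : ℝ :=
  sInf {r | ∃ φ, MemB1 φ ∧ (0 < ∫ t in Ioi (0:ℝ), (φ t) ^ 2) ∧ r = RQ ξ φ}

/-- `Θ₀ = inf_ξ μ₁(ξ)`. -/
def Theta0 : ℝ := sInf (Set.range mu1)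

/-- The Ginzburg–Landau type functional `F_{z,λ}`. -/
def GLF (z lam : ℝ) (φ : ℝ → ℝ) : ℝ :=
  ∫ t in Ioi (0:ℝ),
    ((deriv φ t) ^ 2 + (t - z) ^ 2 * (φ t) ^ 2 + lam / 2 * (φ t) ^ 4 - lam * (φ t) ^ 2)

/-- `f` minimizes `F_{z,λ}` over `B¹(ℝ⁺)`. -/
def IsMinimizer (z lam : ℝ) (f : ℝ → ℝ) : Prop :=
  MemB1 f ∧ ∀ φ, MemB1 φ → GLF z lam f ≤ GLF z lam φ

/-- `(ζ, f)` is a global minimum of the map `(z, φ) ↦ F_{z,λ}(φ)` on `ℝ × B¹(ℝ⁺)`. -/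
def IsGlobalMin (lam ζ : ℝ) (f : ℝ → ℝ) : Prop :=
  MemB1 f ∧ ∀ z : ℝ, ∀ φ, MemB1 φ → GLF ζ lam f ≤ GLF z lam φ

/-- Rayleigh quotient of the operator `-d²/dt² + (t-ν)² + λ f(t)²`. -/
def RQf (lam : ℝ) (f : ℝ → ℝ) (ν : ℝ) (φ : ℝ → ℝ) : ℝ :=
  (∫ t in Ioi (0:ℝ),
    ((deriv φ t) ^ 2 + (t - ν) ^ 2 * (φ t) ^ 2 + lam * (f t) ^ 2 * (φ t) ^ 2)) /
  (∫ t in Ioi (0:ℝ), (φ t) ^ 2)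

/-- Ground state energy `λ₁(ν)` of the Neumann realization of
`-d²/dt² + (t-ν)² + λ f(t)²` on `L²((0,∞))`. -/
def lam1 (lam : ℝ) (f : ℝ → ℝ) (ν : ℝ) : ℝ :=
  sInf {r | ∃ φ, MemB1 φ ∧ (0 < ∫ t in Ioi (0:ℝ), (φ t) ^ 2) ∧ r = RQf lam f ν φ}

/-- Second eigenvalue `λ₂(ν)` of the Neumann realization of
`-d²/dt² + (t-ν)² + λ f(t)²`, by the min-max principle over two-dimensional
subspaces of `B¹(ℝ⁺)` (spanned by `u, v` linearly independent in `L²`). -/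
def lam2 (lam : ℝ) (f : ℝ → ℝ) (ν : ℝ) : ℝ :=
  sInf {r | ∃ u v : ℝ → ℝ, MemB1 u ∧ MemB1 v ∧
    (∀ a b : ℝ, ¬(a = 0 ∧ b = 0) →
      0 < ∫ t in Ioi (0:ℝ), (a * u t + b * v t) ^ 2) ∧
    r = sSup {s | ∃ a b : ℝ, ¬(a = 0 ∧ b = 0) ∧
      s = RQf lam f ν (fun t => a * u t + b * v t)}}


/-!
Write `q_ν` for the quadratic form of `-d²/dt² + (t-ν)² + λ f²` (`energyForm`) and
`η = λ + (ν-ζ)²`. Minimality of `F_{z,λ}(φ)` in `z` gives `∫ (t-ζ) f² = 0`, and minimality in `φ`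
gives the weak Euler–Lagrange equation `q_ζ(f, w) = λ ⟨f, w⟩`. Moving the potential from `ζ` to `ν`
turns these into `q_ν(f, f) = η ‖f‖²` and `q_ν(f, w) = -2(ν-ζ) ⟨(t-ζ) f, w⟩` for `w ⊥ f`.
Split a trial function as `φ = c f + w` with `w ⊥ f`. The min-max value `λ₂(ν)` is at most the top
of the Rayleigh quotient on the plane spanned by `f` and `w`; a 2×2 discriminant computation turns
this into Temple's bound `q_ν(φ, φ) / ‖φ‖² ≥ η - q_ν(f, w)² / ((λ₂(ν) - η) ‖f‖² ‖w‖²)`, and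
Cauchy–Schwarz bounds `q_ν(f, w)²` by `4 (ν-ζ)² ‖(t-ζ) f‖² ‖w‖²`. Finally `f ≠ 0`: since `Θ₀ < λ`,
a small multiple of a de Gennes trial state makes `F` negative, whereas `F_{ζ,λ}(f) ≥ -λ ‖f‖²`.
-/

open Topology

theorem integrableOn_mul_of_memLp {g h : ℝ → ℝ} (hg : MemLp g 2 (volume.restrict (Ioi 0)))
    (hh : MemLp h 2 (volume.restrict (Ioi 0))) : IntegrableOn (fun t => g t * h t) (Ioi 0) :=
  hg.integrable_mul hh

namespace MemB1

variable {φ u v : ℝ → ℝ}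

theorem hasDerivAt (h : MemB1 φ) {t : ℝ} (ht : 0 < t) : HasDerivAt φ (deriv φ t) t :=
  (h.2.1 t ht).hasDerivAt

theorem continuousOn (h : MemB1 φ) : ContinuousOn φ (Ioi 0) :=
  fun _ ht => (h.hasDerivAt ht).continuousAt.continuousWithinAt

theorem aestronglyMeasurable (h : MemB1 φ) :
    AEStronglyMeasurable φ (volume.restrict (Ioi 0)) :=
  h.continuousOn.aestronglyMeasurable measurableSet_Ioi

theorem memLp (h : MemB1 φ) : MemLp φ 2 (volume.restrict (Ioi 0)) :=
  (memLp_two_iff_integrable_sq h.aestronglyMeasurable).2 h.2.2.1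

theorem memLp_deriv (h : MemB1 φ) : MemLp (deriv φ) 2 (volume.restrict (Ioi 0)) :=
  (memLp_two_iff_integrable_sq (measurable_deriv φ).aestronglyMeasurable).2 h.2.2.2.1

theorem memLp_id_mul (h : MemB1 φ) : MemLp (fun t => t * φ t) 2 (volume.restrict (Ioi 0)) :=
  (memLp_two_iff_integrable_sq
    ((continuousOn_id.mul h.continuousOn).aestronglyMeasurable measurableSet_Ioi)).2 h.2.2.2.2

theorem memLp_sub_mul (h : MemB1 φ) (c : ℝ) :
    MemLp (fun t => (t - c) * φ t) 2 (volume.restrict (Ioi 0)) := by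
  convert h.memLp_id_mul.sub (h.memLp.const_mul c) using 1
  ext t
  simp only [Pi.sub_apply]
  ring

theorem deriv_lincomb (hu : MemB1 u) (hv : MemB1 v) (a b : ℝ) {t : ℝ} (ht : 0 < t) :
    deriv (fun s => a * u s + b * v s) t = a * deriv u t + b * deriv v t :=
  (((hu.hasDerivAt ht).const_mul a).add ((hv.hasDerivAt ht).const_mul b)).deriv

theorem lincomb (hu : MemB1 u) (hv : MemB1 v) (a b : ℝ) :
    MemB1 (fun t => a * u t + b * v t) := by
  have hcont : ContinuousOn (fun t => a * u t + b * v t) (Ioi 0) :=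
    (continuousOn_const.mul hu.continuousOn).add (continuousOn_const.mul hv.continuousOn)
  refine ⟨(hu.1.const_mul a).add (hv.1.const_mul b),
    fun t ht => ((hu.2.1 t ht).const_mul a).add ((hv.2.1 t ht).const_mul b), ?_, ?_, ?_⟩
  · exact (memLp_two_iff_integrable_sq (hcont.aestronglyMeasurable measurableSet_Ioi)).1
      ((hu.memLp.const_mul a).add (hv.memLp.const_mul b))
  · have hderiv : (fun t => a * deriv u t + b * deriv v t)
        =ᵐ[volume.restrict (Ioi 0)] deriv (fun t => a * u t + b * v t) := by
      filter_upwards [self_mem_ae_restrict measurableSet_Ioi] with t ht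
      exact (deriv_lincomb hu hv a b ht).symm
    exact (memLp_two_iff_integrable_sq (measurable_deriv _).aestronglyMeasurable).1
      (((hu.memLp_deriv.const_mul a).add (hv.memLp_deriv.const_mul b)).ae_eq hderiv)
  · refine (memLp_two_iff_integrable_sq ?_).1 ?_
    · exact (continuousOn_id.mul hcont).aestronglyMeasurable measurableSet_Ioi
    · convert (hu.memLp_id_mul.const_mul a).add (hv.memLp_id_mul.const_mul b) using 1
      ext t
      simp only [Pi.add_apply]
      ring

theorem sq_le_integral (h : MemB1 φ) {t : ℝ} (ht : 0 < t) :
    φ t ^ 2 ≤ ∫ s in Ioi (0:ℝ), (φ s ^ 2 + deriv φ s ^ 2) := by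
  have hderiv : ∀ s ∈ Ioi t, HasDerivAt (fun s => φ s ^ 2) (2 * φ s * deriv φ s) s := by
    intro s hs
    exact ((h.hasDerivAt (ht.trans hs)).pow 2).congr_deriv (by ring)
  have hint : IntegrableOn (fun s => 2 * φ s * deriv φ s) (Ioi 0) := by
    have := (integrableOn_mul_of_memLp h.memLp h.memLp_deriv).const_mul 2
    simp only [← mul_assoc] at this
    exact this
  have hlim : Tendsto (fun s => φ s ^ 2) atTop (𝓝 0) :=
    tendsto_zero_of_hasDerivAt_of_integrableOn_Ioi hderiv
      (hint.mono_set (Ioi_subset_Ioi ht.le)) (h.2.2.1.mono_set (Ioi_subset_Ioi ht.le))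
  have hftc := integral_Ioi_of_hasDerivAt_of_tendsto
    ((h.hasDerivAt ht).continuousAt.pow 2).continuousWithinAt hderiv
    (hint.mono_set (Ioi_subset_Ioi ht.le)) hlim
  have hbound : ∀ s, -(2 * φ s * deriv φ s) ≤ φ s ^ 2 + deriv φ s ^ 2 := fun s => by
    nlinarith [sq_nonneg (φ s + deriv φ s)]
  calc φ t ^ 2 = ∫ s in Ioi t, -(2 * φ s * deriv φ s) := by
        rw [integral_neg, hftc, Pi.pow_apply]; ring
    _ ≤ ∫ s in Ioi t, (φ s ^ 2 + deriv φ s ^ 2) :=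
        setIntegral_mono_on (hint.mono_set (Ioi_subset_Ioi ht.le)).neg
          ((h.2.2.1.add h.2.2.2.1).mono_set (Ioi_subset_Ioi ht.le)) measurableSet_Ioi
          fun s _ => hbound s
    _ ≤ ∫ s in Ioi (0:ℝ), (φ s ^ 2 + deriv φ s ^ 2) :=
        setIntegral_mono_set (h.2.2.1.add h.2.2.2.1)
          (Eventually.of_forall fun s => by positivity) (Ioi_subset_Ioi ht.le).eventuallyLE

theorem memLp_mul (h : MemB1 φ) {g : ℝ → ℝ} (hg : MemLp g 2 (volume.restrict (Ioi 0))) :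
    MemLp (fun t => φ t * g t) 2 (volume.restrict (Ioi 0)) := by
  set C := ∫ s in Ioi (0:ℝ), (φ s ^ 2 + deriv φ s ^ 2)
  refine hg.of_le_mul (c := √C) (h.aestronglyMeasurable.mul hg.1) ?_
  filter_upwards [self_mem_ae_restrict measurableSet_Ioi] with t ht
  rw [norm_mul]
  exact mul_le_mul_of_nonneg_right (Real.abs_le_sqrt (h.sq_le_integral ht)) (norm_nonneg _)

end MemB1

theorem setIntegral_lincomb3 {s : Set ℝ} {X Y Z : ℝ → ℝ} (hX : IntegrableOn X s)
    (hY : IntegrableOn Y s) (hZ : IntegrableOn Z s) (a b c : ℝ) :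
    ∫ t in s, (a * X t + b * Y t + c * Z t) =
      a * (∫ t in s, X t) + b * (∫ t in s, Y t) + c * ∫ t in s, Z t := by
  have hXY : IntegrableOn (fun t => a * X t + b * Y t) s := (hX.const_mul a).add (hY.const_mul b)
  rw [integral_add hXY (hZ.const_mul c),
    integral_add (hX.const_mul a) (hY.const_mul b), integral_const_mul, integral_const_mul,
    integral_const_mul]

theorem integral_lincomb_sq {u v : ℝ → ℝ} (hu : MemLp u 2 (volume.restrict (Ioi 0)))
    (hv : MemLp v 2 (volume.restrict (Ioi 0))) (a b : ℝ) :
    ∫ t in Ioi (0:ℝ), (a * u t + b * v t) ^ 2 =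
      a ^ 2 * (∫ t in Ioi (0:ℝ), u t ^ 2) + 2 * a * b * (∫ t in Ioi (0:ℝ), u t * v t) +
        b ^ 2 * ∫ t in Ioi (0:ℝ), v t ^ 2 := by
  have hsq : ∀ {g : ℝ → ℝ}, MemLp g 2 (volume.restrict (Ioi 0)) →
      IntegrableOn (fun t => g t ^ 2) (Ioi 0) := fun hg => by
    simpa only [sq] using integrableOn_mul_of_memLp hg hg
  rw [← setIntegral_lincomb3 (hsq hu) (integrableOn_mul_of_memLp hu hv) (hsq hv)]
  exact integral_congr_ae (Eventually.of_forall fun t => by ring)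

theorem integral_mul_sq_le {u v : ℝ → ℝ} (hu : MemLp u 2 (volume.restrict (Ioi 0)))
    (hv : MemLp v 2 (volume.restrict (Ioi 0))) :
    (∫ t in Ioi (0:ℝ), u t * v t) ^ 2 ≤
      (∫ t in Ioi (0:ℝ), u t ^ 2) * ∫ t in Ioi (0:ℝ), v t ^ 2 := by
  have hdisc := discrim_le_zero (a := ∫ t in Ioi (0:ℝ), u t ^ 2)
    (b := 2 * ∫ t in Ioi (0:ℝ), u t * v t) (c := ∫ t in Ioi (0:ℝ), v t ^ 2) fun x => by
    have := integral_lincomb_sq hu hv x 1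
    have hnn : 0 ≤ ∫ t in Ioi (0:ℝ), (x * u t + 1 * v t) ^ 2 :=
      setIntegral_nonneg measurableSet_Ioi fun t _ => sq_nonneg _
    nlinarith
  rw [discrim] at hdisc
  nlinarith

theorem MemB1.exists_orthogonal_decomposition {f φ : ℝ → ℝ} (hf : MemB1 f)
    (hF : 0 < ∫ t in Ioi (0:ℝ), f t ^ 2) (hφ : MemB1 φ) :
    ∃ c : ℝ, ∃ w, MemB1 w ∧ ∫ t in Ioi (0:ℝ), f t * w t = 0 ∧ φ = fun t => c * f t + w t := by
  set c := (∫ t in Ioi (0:ℝ), f t * φ t) / ∫ t in Ioi (0:ℝ), f t ^ 2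
  refine ⟨c, fun t => φ t - c * f t, by simpa [sub_eq_add_neg] using hφ.lincomb hf 1 (-c),
    ?_, funext fun t => by ring⟩
  calc ∫ t in Ioi (0:ℝ), f t * (φ t - c * f t) = ∫ t in Ioi (0:ℝ), (f t * φ t - c * f t ^ 2) :=
        integral_congr_ae (Eventually.of_forall fun t => by ring)
    _ = 0 := by
      rw [integral_sub (integrableOn_mul_of_memLp hf.memLp hφ.memLp) (hf.2.2.1.const_mul c),
        integral_const_mul, div_mul_cancel₀ _ hF.ne', sub_self]

theorem memB1_exp_neg : MemB1 fun t => rexp (-t) := by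
  have hsq : ∀ t : ℝ, rexp (-t) ^ 2 = rexp (-2 * t) := fun t => by
    rw [sq, ← Real.exp_add]; ring_nf
  have hexp : IntegrableOn (fun t => rexp (-t) ^ 2) (Ioi 0) := by
    simpa only [hsq] using exp_neg_integrableOn_Ioi 0 (by norm_num : (0:ℝ) < 2)
  have hderiv : deriv (fun t => rexp (-t)) = fun t => -rexp (-t) := by
    ext t
    simpa using ((hasDerivAt_neg t).exp).deriv
  refine ⟨by fun_prop, fun t _ => by fun_prop, hexp, by simpa [hderiv] using hexp, ?_⟩
  refine (integrableOn_rpow_mul_exp_neg_mul_rpow (s := 2) (p := 1) (b := 2)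
    (by norm_num) one_pos two_pos).congr_fun (fun t _ => ?_) measurableSet_Ioi
  simp only [Real.rpow_two, Real.rpow_one, mul_pow, hsq]

theorem integral_exp_neg_sq_pos : 0 < ∫ t in Ioi (0:ℝ), rexp (-t) ^ 2 :=
  setIntegral_pos_iff_support_of_nonneg_ae (Eventually.of_forall fun t => sq_nonneg _)
    memB1_exp_neg.2.2.1 |>.2 (by simp [Function.support, Real.exp_ne_zero])

theorem RQ_nonneg (ξ : ℝ) (φ : ℝ → ℝ) : 0 ≤ RQ ξ φ :=
  div_nonneg (setIntegral_nonneg measurableSet_Ioi fun t _ => by positivity)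
    (setIntegral_nonneg measurableSet_Ioi fun t _ => by positivity)

theorem Theta0_nonneg : 0 ≤ Theta0 :=
  Real.sInf_nonneg <| forall_mem_range.2 fun ξ =>
    Real.sInf_nonneg fun _ ⟨φ, _, _, hr⟩ => hr ▸ RQ_nonneg ξ φ

def energyDensity (lam : ℝ) (f : ℝ → ℝ) (ν : ℝ) (u v : ℝ → ℝ) (t : ℝ) : ℝ :=
  deriv u t * deriv v t + ((t - ν) ^ 2 + lam * f t ^ 2) * (u t * v t)

def energyForm (lam : ℝ) (f : ℝ → ℝ) (ν : ℝ) (u v : ℝ → ℝ) : ℝ :=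
  ∫ t in Ioi (0:ℝ), energyDensity lam f ν u v t

section EnergyForm

variable {lam ν : ℝ} {f u v : ℝ → ℝ}

theorem RQf_eq_energyForm (φ : ℝ → ℝ) :
    RQf lam f ν φ = energyForm lam f ν φ φ / ∫ t in Ioi (0:ℝ), φ t ^ 2 := by
  unfold RQf energyForm energyDensity
  congr 1
  exact integral_congr_ae (Eventually.of_forall fun t => by ring)

theorem integrableOn_energyDensity (hf : MemB1 f) (hu : MemB1 u) (hv : MemB1 v) :
    IntegrableOn (energyDensity lam f ν u v) (Ioi 0) := by
  have h := ((integrableOn_mul_of_memLp hu.memLp_deriv hv.memLp_deriv).add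
    (integrableOn_mul_of_memLp (hu.memLp_sub_mul ν) (hv.memLp_sub_mul ν))).add
    ((integrableOn_mul_of_memLp (hf.memLp_mul hu.memLp) (hf.memLp_mul hv.memLp)).const_mul lam)
  refine h.congr_fun (fun t _ => ?_) measurableSet_Ioi
  simp only [energyDensity, Pi.add_apply]
  ring

theorem energyForm_self_nonneg (hlam : 0 ≤ lam) (u : ℝ → ℝ) : 0 ≤ energyForm lam f ν u u :=
  setIntegral_nonneg measurableSet_Ioi fun t _ => by simp only [energyDensity, ← sq]; positivity

theorem energyForm_lincomb (hf : MemB1 f) (hu : MemB1 u) (hv : MemB1 v) (a b : ℝ) :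
    energyForm lam f ν (fun t => a * u t + b * v t) (fun t => a * u t + b * v t) =
      a ^ 2 * energyForm lam f ν u u + 2 * a * b * energyForm lam f ν u v +
        b ^ 2 * energyForm lam f ν v v := by
  unfold energyForm
  rw [← setIntegral_lincomb3 (integrableOn_energyDensity hf hu hu)
    (integrableOn_energyDensity hf hu hv) (integrableOn_energyDensity hf hv hv)]
  refine setIntegral_congr_fun measurableSet_Ioi fun t ht => ?_
  simp only [energyDensity, hu.deriv_lincomb hv a b ht]
  ring

theorem energyForm_shift (hf : MemB1 f) (hu : MemB1 u) (hv : MemB1 v) (ζ : ℝ) :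
    energyForm lam f ν u v = energyForm lam f ζ u v +
      (ν - ζ) ^ 2 * (∫ t in Ioi (0:ℝ), u t * v t) -
        2 * (ν - ζ) * ∫ t in Ioi (0:ℝ), (t - ζ) * u t * v t := by
  have hmoment := integrableOn_mul_of_memLp (hu.memLp_sub_mul ζ) hv.memLp
  unfold energyForm
  rw [sub_eq_add_neg, ← neg_mul, ← one_mul (∫ t in Ioi (0:ℝ), energyDensity lam f ζ u v t),
    ← setIntegral_lincomb3 (integrableOn_energyDensity hf hu hv)
      (integrableOn_mul_of_memLp hu.memLp hv.memLp) hmoment]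
  exact integral_congr_ae (Eventually.of_forall fun t => by unfold energyDensity; ring)

end EnergyForm

theorem eq_zero_of_forall_quartic_nonneg {a b c d : ℝ}
    (h : ∀ x : ℝ, 0 ≤ a * x + b * x ^ 2 + c * x ^ 3 + d * x ^ 4) : a = 0 := by
  have hmin : IsLocalMin (fun x : ℝ => a * x + b * x ^ 2 + c * x ^ 3 + d * x ^ 4) 0 :=
    Eventually.of_forall fun x => by simpa using h x
  have hderiv : HasDerivAt (fun x : ℝ => a * x + b * x ^ 2 + c * x ^ 3 + d * x ^ 4) a 0 := by
    have := ((((hasDerivAt_id' (0:ℝ)).const_mul a).fun_add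
      ((hasDerivAt_pow 2 (0:ℝ)).const_mul b)).fun_add
      ((hasDerivAt_pow 3 (0:ℝ)).const_mul c)).fun_add ((hasDerivAt_pow 4 (0:ℝ)).const_mul d)
    exact this.congr_deriv (by norm_num)
  exact hmin.hasDerivAt_eq_zero hderiv

theorem exists_quadratic_add_quartic_neg {b d : ℝ} (hb : b < 0) :
    ∃ x : ℝ, b * x ^ 2 + d * x ^ 4 < 0 := by
  set u := -b / (|d| + 1)
  have hu : 0 < u := div_pos (neg_pos.2 hb) (by positivity)
  have hdu : |d| * u < -b := by
    calc |d| * u < (|d| + 1) * u := by linarith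
      _ = -b := mul_div_cancel₀ _ (by positivity)
  refine ⟨√u, ?_⟩
  rw [show √u ^ 4 = (√u ^ 2) ^ 2 by ring, Real.sq_sqrt hu.le]
  nlinarith [le_abs_self d, mul_pos hu hu]

section GLF

variable {f φ w : ℝ → ℝ}

theorem integrableOn_GLF_integrand (hφ : MemB1 φ) (z lam : ℝ) :
    IntegrableOn (fun t => deriv φ t ^ 2 + (t - z) ^ 2 * φ t ^ 2 + lam / 2 * φ t ^ 4 -
      lam * φ t ^ 2) (Ioi 0) := by
  have hφφ := hφ.memLp_mul hφ.memLp
  have h := (((integrableOn_mul_of_memLp hφ.memLp_deriv hφ.memLp_deriv).add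
    (integrableOn_mul_of_memLp (hφ.memLp_sub_mul z) (hφ.memLp_sub_mul z))).add
    ((integrableOn_mul_of_memLp hφφ hφφ).const_mul (lam / 2))).sub
    ((integrableOn_mul_of_memLp hφ.memLp hφ.memLp).const_mul lam)
  refine h.congr_fun (fun t _ => ?_) measurableSet_Ioi
  simp only [Pi.add_apply, Pi.sub_apply]
  ring

theorem neg_mul_integral_sq_le_GLF {lam : ℝ} (hlam : 0 ≤ lam) (hφ : MemB1 φ) (z : ℝ) :
    -lam * ∫ t in Ioi (0:ℝ), φ t ^ 2 ≤ GLF z lam φ := by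
  have hle : ∀ t, -lam * φ t ^ 2 ≤
      deriv φ t ^ 2 + (t - z) ^ 2 * φ t ^ 2 + lam / 2 * φ t ^ 4 - lam * φ t ^ 2 := fun t => by
    have : 0 ≤ lam / 2 * φ t ^ 4 := by positivity
    nlinarith [sq_nonneg (deriv φ t), sq_nonneg ((t - z) * φ t)]
  rw [← integral_const_mul]
  exact setIntegral_mono_on (hφ.2.2.1.const_mul _) (integrableOn_GLF_integrand hφ z lam)
    measurableSet_Ioi fun t _ => hle t

theorem GLF_smul (hφ : MemB1 φ) (z lam s : ℝ) :
    GLF z lam (fun t => s * φ t) =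
      ((∫ t in Ioi (0:ℝ), (deriv φ t ^ 2 + (t - z) ^ 2 * φ t ^ 2)) -
        lam * ∫ t in Ioi (0:ℝ), φ t ^ 2) * s ^ 2 +
      lam / 2 * (∫ t in Ioi (0:ℝ), φ t ^ 4) * s ^ 4 := by
  have hφφ := hφ.memLp_mul hφ.memLp
  have hN : IntegrableOn (fun t => deriv φ t ^ 2 + (t - z) ^ 2 * φ t ^ 2) (Ioi 0) :=
    hφ.2.2.2.1.add ((integrableOn_mul_of_memLp (hφ.memLp_sub_mul z) (hφ.memLp_sub_mul z)).congr_fun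
      (fun t _ => by ring) measurableSet_Ioi)
  have hsplit : GLF z lam (fun t => s * φ t) = ∫ t in Ioi (0:ℝ),
      (s ^ 2 * (deriv φ t ^ 2 + (t - z) ^ 2 * φ t ^ 2) + (-lam * s ^ 2) * φ t ^ 2 +
        (lam / 2 * s ^ 4) * φ t ^ 4) := by
    refine setIntegral_congr_fun measurableSet_Ioi fun t ht => ?_
    simp only [((hφ.hasDerivAt ht).const_mul s).deriv]
    ring
  have hK : IntegrableOn (fun t => φ t ^ 4) (Ioi 0) :=
    (integrableOn_mul_of_memLp hφφ hφφ).congr_fun (fun t _ => by ring) measurableSet_Ioi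
  rw [hsplit, setIntegral_lincomb3 hN hφ.2.2.1 hK]
  ring

theorem GLF_add_smul (hf : MemB1 f) (hw : MemB1 w) (ζ lam : ℝ) :
    ∃ b c d : ℝ, ∀ ε : ℝ, GLF ζ lam (fun t => f t + ε * w t) = GLF ζ lam f +
      2 * (energyForm lam f ζ f w - lam * ∫ t in Ioi (0:ℝ), f t * w t) * ε +
        b * ε ^ 2 + c * ε ^ 3 + d * ε ^ 4 := by
  have hfw := hf.memLp_mul hw.memLp
  have hww := hw.memLp_mul hw.memLp
  set q : ℝ → ℝ := fun t => deriv w t * deriv w t + (t - ζ) * w t * ((t - ζ) * w t) +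
    3 * lam * (f t * w t * (f t * w t)) - lam * (w t * w t)
  have hq : IntegrableOn q (Ioi 0) :=
    (((integrableOn_mul_of_memLp hw.memLp_deriv hw.memLp_deriv).add
      (integrableOn_mul_of_memLp (hw.memLp_sub_mul ζ) (hw.memLp_sub_mul ζ))).add
      ((integrableOn_mul_of_memLp hfw hfw).const_mul _)).sub
      ((integrableOn_mul_of_memLp hw.memLp hw.memLp).const_mul _)
  refine ⟨∫ t in Ioi (0:ℝ), q t, 2 * lam * ∫ t in Ioi (0:ℝ), f t * w t * (w t * w t),
    lam / 2 * ∫ t in Ioi (0:ℝ), w t * w t * (w t * w t), fun ε => ?_⟩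
  have hsplit : GLF ζ lam (fun t => f t + ε * w t) = ∫ t in Ioi (0:ℝ),
      ((1 * (deriv f t ^ 2 + (t - ζ) ^ 2 * f t ^ 2 + lam / 2 * f t ^ 4 - lam * f t ^ 2) +
        (2 * ε) * energyDensity lam f ζ f w t + (-2 * lam * ε) * (f t * w t)) +
      (ε ^ 2 * q t + (2 * lam * ε ^ 3) * (f t * w t * (w t * w t)) +
        (lam / 2 * ε ^ 4) * (w t * w t * (w t * w t)))) := by
    refine setIntegral_congr_fun measurableSet_Ioi fun t ht => ?_
    simp only [((hf.hasDerivAt ht).fun_add ((hw.hasDerivAt ht).const_mul ε)).deriv,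
      energyDensity, q]
    ring
  have hP := integrableOn_GLF_integrand hf ζ lam
  have hE := integrableOn_energyDensity (lam := lam) (ν := ζ) hf hf hw
  have hfw' := integrableOn_mul_of_memLp hf.memLp hw.memLp
  have hq3 := integrableOn_mul_of_memLp hfw hww
  have hq4 := integrableOn_mul_of_memLp hww hww
  rw [hsplit,
    integral_add (by exact ((hP.const_mul 1).add (hE.const_mul _)).add (hfw'.const_mul _))
      (by exact ((hq.const_mul _).add (hq3.const_mul _)).add (hq4.const_mul _)),
    setIntegral_lincomb3 hP hE hfw', setIntegral_lincomb3 hq hq3 hq4]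
  unfold GLF energyForm
  ring

theorem GLF_shift (hf : MemB1 f) (z ζ lam : ℝ) :
    GLF z lam f = GLF ζ lam f + (-2 * (∫ t in Ioi (0:ℝ), (t - ζ) * f t * f t)) * (z - ζ) +
      (∫ t in Ioi (0:ℝ), f t ^ 2) * (z - ζ) ^ 2 := by
  have hsplit : GLF z lam f = ∫ t in Ioi (0:ℝ),
      (1 * (deriv f t ^ 2 + (t - ζ) ^ 2 * f t ^ 2 + lam / 2 * f t ^ 4 - lam * f t ^ 2) +
        (-2 * (z - ζ)) * ((t - ζ) * f t * f t) + (z - ζ) ^ 2 * f t ^ 2) :=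
    integral_congr_ae (Eventually.of_forall fun t => by ring)
  rw [hsplit, setIntegral_lincomb3 (integrableOn_GLF_integrand hf ζ lam)
    (integrableOn_mul_of_memLp (hf.memLp_sub_mul ζ) hf.memLp) hf.2.2.1]
  unfold GLF
  ring

theorem exists_GLF_neg {lam : ℝ} (hlam : Theta0 < lam) : ∃ z φ, MemB1 φ ∧ GLF z lam φ < 0 := by
  obtain ⟨_, ⟨ξ, rfl⟩, hξ⟩ := exists_lt_of_csInf_lt (range_nonempty mu1) hlam
  -- the witness `exp (-t)` rules out the junk value `mu1 ξ = sInf ∅ = 0`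
  obtain ⟨_, ⟨φ, hφ, hpos, rfl⟩, hRQ⟩ : ∃ r ∈ {r | ∃ φ, MemB1 φ ∧
      0 < ∫ t in Ioi (0:ℝ), φ t ^ 2 ∧ r = RQ ξ φ}, r < lam :=
    exists_lt_of_csInf_lt ⟨_, _, memB1_exp_neg, integral_exp_neg_sq_pos, rfl⟩ hξ
  have hN := (div_lt_iff₀ hpos).1 hRQ
  obtain ⟨s, hs⟩ := exists_quadratic_add_quartic_neg (d := lam / 2 * ∫ t in Ioi (0:ℝ), φ t ^ 4)
    (sub_neg.2 hN)
  exact ⟨ξ, _, by simpa using hφ.lincomb hφ s 0, by rw [GLF_smul hφ]; exact hs⟩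

end GLF

theorem sq_mul_add_sq_mul_pos {F W a b : ℝ} (hF : 0 < F) (hW : 0 < W)
    (hab : ¬(a = 0 ∧ b = 0)) : 0 < a ^ 2 * F + b ^ 2 * W := by
  rcases not_and_or.1 hab with ha | hb
  · have := pow_pos (abs_pos.2 ha) 2
    rw [sq_abs] at this
    positivity
  · have := pow_pos (abs_pos.2 hb) 2
    rw [sq_abs] at this
    positivity

theorem mul_sub_le_sq_of_le_rayleigh {F W η Q T L a b : ℝ} (hF : 0 < F) (hηL : η < L)
    (hab : ¬(a = 0 ∧ b = 0))
    (h : L * (a ^ 2 * F + b ^ 2 * W) ≤ a ^ 2 * (η * F) + 2 * a * b * Q + b ^ 2 * T) :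
    (L - η) * F * (L * W - T) ≤ Q ^ 2 := by
  have hα : 0 < (L - η) * F := mul_pos (sub_pos.2 hηL) hF
  have hb : b ≠ 0 := by
    rintro rfl
    have ha : a ≠ 0 := fun ha => hab ⟨ha, rfl⟩
    nlinarith [pow_pos (abs_pos.2 ha) 2, sq_abs a]
  -- `α (α a² - 2Qab + γ b²) = (α a - Q b)² + (α γ - Q²) b²` with `α = (L - η) F`, `γ = L W - T`
  have hkey : ((L - η) * F * (L * W - T) - Q ^ 2) * b ^ 2 ≤ 0 := by
    nlinarith [sq_nonneg ((L - η) * F * a - Q * b)]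
  nlinarith [pow_pos (abs_pos.2 hb) 2, sq_abs b]

theorem temple_two_dim {F W η Q T Λ : ℝ} (hF : 0 < F) (hW : 0 < W) (hηΛ : η < Λ)
    (h : ∀ L < Λ, ∃ a b : ℝ, ¬(a = 0 ∧ b = 0) ∧
      L < (a ^ 2 * (η * F) + 2 * a * b * Q + b ^ 2 * T) / (a ^ 2 * F + b ^ 2 * W)) (c : ℝ) :
    η - Q ^ 2 / ((Λ - η) * (F * W)) ≤ (c ^ 2 * (η * F) + 2 * c * Q + T) / (c ^ 2 * F + W) := by
  have hnear : ∀ᶠ L in 𝓝[<] Λ, (L - η) * F * (L * W - T) ≤ Q ^ 2 := by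
    filter_upwards [Ioo_mem_nhdsLT hηΛ] with L hL
    obtain ⟨a, b, hab, hlt⟩ := h L hL.2
    rw [lt_div_iff₀ (sq_mul_add_sq_mul_pos hF hW hab)] at hlt
    exact mul_sub_le_sq_of_le_rayleigh hF hL.1 hab hlt.le
  have hΛ : (Λ - η) * F * (Λ * W - T) ≤ Q ^ 2 :=
    le_of_tendsto ((Continuous.tendsto (by fun_prop) Λ).mono_left nhdsWithin_le_nhds) hnear
  have hd : 0 < Λ - η := sub_pos.2 hηΛ
  have hK : 0 < (Λ - η) * (F * W) := by positivity
  -- after clearing denominators the slack is `F ((Λ - η) W + c Q)²` plus a multiple of `hΛ`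
  rw [le_div_iff₀ (by positivity)]
  refine le_of_mul_le_mul_right ?_ hK
  rw [sub_mul, sub_mul, mul_right_comm (Q ^ 2 / _), div_mul_cancel₀ _ hK.ne']
  nlinarith [mul_nonneg hF.le (sq_nonneg ((Λ - η) * W + c * Q)),
    mul_le_mul_of_nonneg_right hΛ hW.le]

section Temple

variable {lam ν : ℝ} {f u v : ℝ → ℝ}

theorem exists_lt_RQf_of_lt_lam2 (hlam : 0 ≤ lam) (hu : MemB1 u) (hv : MemB1 v)
    (hpos : ∀ a b : ℝ, ¬(a = 0 ∧ b = 0) → 0 < ∫ t in Ioi (0:ℝ), (a * u t + b * v t) ^ 2)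
    {L : ℝ} (hL : L < lam2 lam f ν) :
    ∃ a b : ℝ, ¬(a = 0 ∧ b = 0) ∧ L < RQf lam f ν (fun t => a * u t + b * v t) := by
  have hbdd : BddBelow {r | ∃ u v : ℝ → ℝ, MemB1 u ∧ MemB1 v ∧
      (∀ a b : ℝ, ¬(a = 0 ∧ b = 0) → 0 < ∫ t in Ioi (0:ℝ), (a * u t + b * v t) ^ 2) ∧
      r = sSup {s | ∃ a b : ℝ, ¬(a = 0 ∧ b = 0) ∧
        s = RQf lam f ν (fun t => a * u t + b * v t)}} := by
    refine ⟨0, fun _ ⟨u, v, _, _, _, hr⟩ => hr ▸ Real.sSup_nonneg fun _ ⟨a, b, _, hs⟩ => ?_⟩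
    rw [hs, RQf_eq_energyForm]
    exact div_nonneg (energyForm_self_nonneg hlam _)
      (setIntegral_nonneg measurableSet_Ioi fun t _ => sq_nonneg _)
  have hle := csInf_le hbdd ⟨u, v, hu, hv, hpos, rfl⟩
  obtain ⟨_, ⟨a, b, hab, rfl⟩, hlt⟩ : ∃ s ∈ {s | ∃ a b : ℝ, ¬(a = 0 ∧ b = 0) ∧
      s = RQf lam f ν (fun t => a * u t + b * v t)}, L < s :=
    exists_lt_of_lt_csSup ⟨_, 1, 0, by norm_num, rfl⟩ (hL.trans_le hle)
  exact ⟨a, b, hab, hlt⟩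

theorem RQf_lincomb_of_orthogonal (hf : MemB1 f) (hu : MemB1 u) (hv : MemB1 v)
    (huv : ∫ t in Ioi (0:ℝ), u t * v t = 0) (a b : ℝ) :
    RQf lam f ν (fun t => a * u t + b * v t) =
      (a ^ 2 * energyForm lam f ν u u + 2 * a * b * energyForm lam f ν u v +
        b ^ 2 * energyForm lam f ν v v) /
      (a ^ 2 * (∫ t in Ioi (0:ℝ), u t ^ 2) + b ^ 2 * ∫ t in Ioi (0:ℝ), v t ^ 2) := by
  rw [RQf_eq_energyForm, energyForm_lincomb hf hu hv, integral_lincomb_sq hu.memLp hv.memLp,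
    huv, mul_zero, add_zero]

theorem temple_inequality (hlam : 0 ≤ lam) (hf : MemB1 f) (hu : MemB1 u) (hv : MemB1 v)
    (huv : ∫ t in Ioi (0:ℝ), u t * v t = 0) (hU : 0 < ∫ t in Ioi (0:ℝ), u t ^ 2)
    (hV : 0 < ∫ t in Ioi (0:ℝ), v t ^ 2) {η : ℝ}
    (hη : energyForm lam f ν u u = η * ∫ t in Ioi (0:ℝ), u t ^ 2) (hηΛ : η < lam2 lam f ν)
    (c : ℝ) :
    η - energyForm lam f ν u v ^ 2 /
        ((lam2 lam f ν - η) * ((∫ t in Ioi (0:ℝ), u t ^ 2) * ∫ t in Ioi (0:ℝ), v t ^ 2)) ≤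
      RQf lam f ν (fun t => c * u t + v t) := by
  have hpos : ∀ a b : ℝ, ¬(a = 0 ∧ b = 0) → 0 < ∫ t in Ioi (0:ℝ), (a * u t + b * v t) ^ 2 :=
    fun a b hab => by
      rw [integral_lincomb_sq hu.memLp hv.memLp, huv, mul_zero, add_zero]
      exact sq_mul_add_sq_mul_pos hU hV hab
  have h := temple_two_dim hU hV hηΛ (fun L hL => by
    obtain ⟨a, b, hab, hlt⟩ := exists_lt_RQf_of_lt_lam2 hlam hu hv hpos hL
    exact ⟨a, b, hab, by rwa [RQf_lincomb_of_orthogonal hf hu hv huv, hη] at hlt⟩) c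
  have hφ := RQf_lincomb_of_orthogonal (lam := lam) (ν := ν) hf hu hv huv c 1
  simp only [one_mul, one_pow, mul_one] at hφ
  rwa [hφ, hη]

theorem temple_inequality_of_sq_le (hlam : 0 ≤ lam) (hf : MemB1 f) (hu : MemB1 u) (hv : MemB1 v)
    (huv : ∫ t in Ioi (0:ℝ), u t * v t = 0) (hU : 0 < ∫ t in Ioi (0:ℝ), u t ^ 2) {η K c : ℝ}
    (hη : energyForm lam f ν u u = η * ∫ t in Ioi (0:ℝ), u t ^ 2) (hηΛ : η < lam2 lam f ν)
    (hK : energyForm lam f ν u v ^ 2 ≤ K * ∫ t in Ioi (0:ℝ), v t ^ 2) (hK0 : 0 ≤ K)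
    (hpos : 0 < ∫ t in Ioi (0:ℝ), (c * u t + v t) ^ 2) :
    η - K / ((lam2 lam f ν - η) * ∫ t in Ioi (0:ℝ), u t ^ 2) ≤
      RQf lam f ν (fun t => c * u t + v t) := by
  rcases (setIntegral_nonneg measurableSet_Ioi fun t _ => sq_nonneg (v t)).eq_or_lt with hV | hV
  · -- `v = 0` in `L²`, so `q(u, v) = 0` and the quotient is at least `η`
    have huv' : energyForm lam f ν u v = 0 := by
      rw [← hV, mul_zero] at hK
      exact pow_eq_zero_iff two_ne_zero |>.1 (le_antisymm hK (sq_nonneg _))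
    have hφ := RQf_lincomb_of_orthogonal (lam := lam) (ν := ν) hf hu hv huv c 1
    have hden := integral_lincomb_sq hu.memLp hv.memLp c 1
    simp only [one_mul, one_pow, mul_one, huv, ← hV, mul_zero, add_zero] at hφ hden
    rw [hden] at hpos
    rw [hφ, hη, huv', le_div_iff₀ hpos]
    have hT := energyForm_self_nonneg (f := f) (ν := ν) hlam v
    have hKD : 0 ≤ K / ((lam2 lam f ν - η) * ∫ t in Ioi (0:ℝ), u t ^ 2) := by positivity
    nlinarith [mul_nonneg hKD hpos.le]
  · refine le_trans (sub_le_sub_left ?_ _) (temple_inequality hlam hf hu hv huv hU hV hη hηΛ c)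
    rw [div_le_div_iff₀ (by positivity) (by positivity)]
    nlinarith [mul_le_mul_of_nonneg_left hK
      (by positivity : 0 ≤ (lam2 lam f ν - η) * ∫ t in Ioi (0:ℝ), u t ^ 2)]

end Temple

namespace IsGlobalMin

variable {lam ζ ν : ℝ} {f φ : ℝ → ℝ}

theorem energyForm_eq (hmin : IsGlobalMin lam ζ f) {w : ℝ → ℝ} (hw : MemB1 w) :
    energyForm lam f ζ f w = lam * ∫ t in Ioi (0:ℝ), f t * w t := by
  obtain ⟨b, c, d, hexp⟩ := GLF_add_smul hmin.1 hw ζ lam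
  have hlin := eq_zero_of_forall_quartic_nonneg
      (a := 2 * (energyForm lam f ζ f w - lam * ∫ t in Ioi (0:ℝ), f t * w t))
      (b := b) (c := c) (d := d) fun ε => by
    have := hmin.2 ζ _ (by simpa using hmin.1.lincomb hw 1 ε)
    rw [hexp ε] at this
    linarith
  linarith

theorem integral_moment_eq_zero (hmin : IsGlobalMin lam ζ f) :
    ∫ t in Ioi (0:ℝ), (t - ζ) * f t * f t = 0 := by
  have hlin := eq_zero_of_forall_quartic_nonneg
      (a := -2 * ∫ t in Ioi (0:ℝ), (t - ζ) * f t * f t) (b := ∫ t in Ioi (0:ℝ), f t ^ 2)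
      (c := 0) (d := 0) fun x => by
    have := hmin.2 (ζ + x) f hmin.1
    rw [GLF_shift hmin.1 (ζ + x) ζ, add_sub_cancel_left] at this
    linarith
  linarith

theorem integral_sq_pos (hlam : Theta0 < lam) (hmin : IsGlobalMin lam ζ f) :
    0 < ∫ t in Ioi (0:ℝ), f t ^ 2 := by
  have hlam0 : 0 < lam := Theta0_nonneg.trans_lt hlam
  obtain ⟨z, φ, hφ, hneg⟩ := exists_GLF_neg hlam
  have := (neg_mul_integral_sq_le_GLF hlam0.le hmin.1 ζ).trans (hmin.2 z φ hφ)
  exact pos_of_mul_pos_right (by linarith) hlam0.le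

theorem energyForm_left (hmin : IsGlobalMin lam ζ f) {w : ℝ → ℝ} (hw : MemB1 w) :
    energyForm lam f ν f w = (lam + (ν - ζ) ^ 2) * (∫ t in Ioi (0:ℝ), f t * w t) -
      2 * (ν - ζ) * ∫ t in Ioi (0:ℝ), (t - ζ) * f t * w t := by
  rw [energyForm_shift hmin.1 hmin.1 hw ζ, hmin.energyForm_eq hw]
  ring

theorem temple_bound_le_RQf (hlam : 0 < lam) (hmin : IsGlobalMin lam ζ f)
    (hF : 0 < ∫ t in Ioi (0:ℝ), f t ^ 2) (hν : lam + (ν - ζ) ^ 2 < lam2 lam f ν) (hφ : MemB1 φ)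
    (hφpos : 0 < ∫ t in Ioi (0:ℝ), φ t ^ 2) :
    lam + (ν - ζ) ^ 2 *
      (1 - 4 * (∫ t in Ioi (0:ℝ), (t - ζ) ^ 2 * (f t) ^ 2) /
        ((lam2 lam f ν - lam - (ν - ζ) ^ 2) * ∫ t in Ioi (0:ℝ), (f t) ^ 2)) ≤
      RQf lam f ν φ := by
  have hf := hmin.1
  obtain ⟨c, w, hw, hfw, rfl⟩ := hf.exists_orthogonal_decomposition hF hφ
  have hEff : energyForm lam f ν f f = (lam + (ν - ζ) ^ 2) * ∫ t in Ioi (0:ℝ), f t ^ 2 := by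
    rw [hmin.energyForm_left hf, hmin.integral_moment_eq_zero]
    simp only [← sq]
    ring
  have hI : ∫ t in Ioi (0:ℝ), (t - ζ) ^ 2 * f t ^ 2 = ∫ t in Ioi (0:ℝ), ((t - ζ) * f t) ^ 2 :=
    integral_congr_ae (Eventually.of_forall fun t => (mul_pow _ _ 2).symm)
  have hK : energyForm lam f ν f w ^ 2 ≤
      4 * (ν - ζ) ^ 2 * (∫ t in Ioi (0:ℝ), (t - ζ) ^ 2 * f t ^ 2) * ∫ t in Ioi (0:ℝ), w t ^ 2 := by
    have hCS := integral_mul_sq_le (hf.memLp_sub_mul ζ) hw.memLp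
    rw [hmin.energyForm_left hw, hfw, hI]
    nlinarith [mul_le_mul_of_nonneg_left hCS (by positivity : (0:ℝ) ≤ 4 * (ν - ζ) ^ 2)]
  have hI0 : 0 ≤ ∫ t in Ioi (0:ℝ), (t - ζ) ^ 2 * f t ^ 2 :=
    setIntegral_nonneg measurableSet_Ioi fun t _ => by positivity
  convert temple_inequality_of_sq_le hlam.le hf hf hw hfw hF hEff hν hK
    (mul_nonneg (by positivity) hI0) hφpos using 1
  ring

end IsGlobalMin

theorem temple_lower_bound_general (lam ζ : ℝ) (f : ℝ → ℝ)
    (hlam0 : Theta0 < lam)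
    (hmin : IsGlobalMin lam ζ f)
    (ν : ℝ) (hν : lam + (ν - ζ) ^ 2 < lam2 lam f ν) :
    lam + (ν - ζ) ^ 2 *
      (1 - 4 * (∫ t in Ioi (0:ℝ), (t - ζ) ^ 2 * (f t) ^ 2) /
        ((lam2 lam f ν - lam - (ν - ζ) ^ 2) * ∫ t in Ioi (0:ℝ), (f t) ^ 2)) ≤
      lam1 lam f ν := by
  have hF := hmin.integral_sq_pos hlam0
  refine le_csInf ⟨_, f, hmin.1, hF, rfl⟩ ?_
  rintro _ ⟨φ, hφ, hφpos, rfl⟩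
  exact hmin.temple_bound_le_RQf (Theta0_nonneg.trans_lt hlam0) hF hν hφ hφpos

/-- Temple-inequality lower bound for `λ₁(ν)`. -/
theorem temple_lower_bound (lam ζ : ℝ) (f : ℝ → ℝ)
    (hlam0 : Theta0 < lam) (hlam1 : lam ≤ 1)
    (hmin : IsGlobalMin lam ζ f) (hfpos : ∀ t : ℝ, 0 ≤ t → 0 ≤ f t)
    (ν : ℝ) (hν : lam + (ν - ζ) ^ 2 < lam2 lam f ν) :
    lam + (ν - ζ) ^ 2 *
      (1 - 4 * (∫ t in Ioi (0:ℝ), (t - ζ) ^ 2 * (f t) ^ 2) /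
        ((lam2 lam f ν - lam - (ν - ζ) ^ 2) * ∫ t in Ioi (0:ℝ), (f t) ^ 2)) ≤
      lam1 lam f ν :=
  temple_lower_bound_general lam ζ f hlam0 hmin ν hν
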